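/- arXiv:2501.11610 — 8 statements merged into one kernel-verified Lean document; each statement's English description precedes it below -/
import Mathlib

section
/- Let k ≥ 1 and let m ≥ 1 be odd, and set n = m·2^k − 1. Then for every natural number d with 0 ≤ d < 2^k and every N, the polynomial I_{n,d} is equal to 0 in MvPolynomial (Fin N) (ZMod 2). -/
/-!
With `G_i = ∑ₙ xᵢⁿ tⁿ = 1 / (1 - xᵢ t)`, the generating function of the `h_d` is `H = ∏ᵢ G_i`, and
`t G_i' = (G_i - 1) G_i` gives `t H' = P H` with `P = ∑ᵢ (G_i - 1) = ∑_{j ≥ 1} p_j tʲ`. Comparing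
coefficients of `t^d` is Newton's identity `d h_d = ∑_{j=1}^{d} h_{d-j} p_j`.

Since `n + 1 = m 2^k` with `k ≥ 1`, `n` is odd and all binary digits of `n` below `2^k` are `1`,
so by Lucas's theorem `C(n, j)` is odd for `j < 2^k`. Hence, modulo 2 (where `n - d + 1 ≡ d`),
`I_{n,d}` reduces to `d h_d + ∑_{j=1}^{d} h_{d-j} p_j = 2 d h_d = 0`.
-/

open MvPolynomial

/-- The polynomial `I_{n,d}` in `N` variables over `ZMod 2`:
`ε(n-d+1)·h_d + ∑_{j=1}^{d} ε(C(n,j))·h_{d-j}·p_j`. -/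
noncomputable def Ipoly (N n d : ℕ) : MvPolynomial (Fin N) (ZMod 2) :=
  C (((n : ℤ) - (d : ℤ) + 1 : ℤ) : ZMod 2) * hsymm (Fin N) (ZMod 2) d +
    ∑ j ∈ Finset.Icc 1 d,
      C (((n.choose j : ℤ)) : ZMod 2) * hsymm (Fin N) (ZMod 2) (d - j) *
        psum (Fin N) (ZMod 2) j

namespace PowerSeries

variable {A : Type*} [CommRing A]

noncomputable def geomSeries (a : A) : A⟦X⟧ := mk (a ^ ·)

theorem geomSeries_eq_one_add (a : A) : geomSeries a = 1 + C a * X * geomSeries a := by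
  ext n
  cases n with
  | zero => simp [geomSeries]
  | succ n => simp [geomSeries, mul_assoc, coeff_succ_X_mul, pow_succ']

theorem X_mul_derivative_geomSeries (a : A) :
    X * d⁄dX A (geomSeries a) = (geomSeries a - 1) * geomSeries a := by
  set G := geomSeries a
  have hG : G = 1 + C a * X * G := geomSeries_eq_one_add a
  have hD : d⁄dX A G = C a * G + C a * X * d⁄dX A G := by
    conv_lhs => rw [hG]
    simp only [map_add, Derivation.map_one_eq_zero, Derivation.leibniz, smul_eq_mul, derivative_X,
      derivative_C, mul_one, mul_zero, add_zero, zero_add]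
    ring
  linear_combination (X * G) * hD - (X * d⁄dX A G + G) * hG

theorem X_mul_derivative_prod_geomSeries {ι : Type*} [DecidableEq ι] (s : Finset ι)
    (a : ι → A) :
    X * d⁄dX A (∏ i ∈ s, geomSeries (a i)) =
      (∑ i ∈ s, (geomSeries (a i) - 1)) * ∏ i ∈ s, geomSeries (a i) := by
  induction s using Finset.induction_on with
  | empty => simp
  | insert b s hb ih =>
    rw [Finset.prod_insert hb, Finset.sum_insert hb, Derivation.leibniz, smul_eq_mul, smul_eq_mul]
    linear_combination
      geomSeries (a b) * ih + (∏ i ∈ s, geomSeries (a i)) * X_mul_derivative_geomSeries (a b)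

theorem coeff_X_mul_derivative (f : A⟦X⟧) (n : ℕ) : coeff n (X * d⁄dX A f) = n * coeff n f := by
  cases n with
  | zero => simp
  | succ n => rw [coeff_succ_X_mul, coeff_derivative, mul_comm]; push_cast; rfl

end PowerSeries

namespace MvPolynomial

open PowerSeries (geomSeries)

variable (σ R : Type*) [Fintype σ] [CommRing R]

theorem coeff_prod_geomSeries_X [DecidableEq σ] (n : ℕ) :
    PowerSeries.coeff n (∏ i : σ, geomSeries (X i : MvPolynomial σ R)) = hsymm σ R n := by
  simp only [PowerSeries.coeff_prod, geomSeries, PowerSeries.coeff_mk, hsymm]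
  rw [← Finset.sum_coe_sort]
  symm
  refine Fintype.sum_equiv ((Sym.equivNatSum σ n).trans (Equiv.subtypeEquivRight fun l => ?_)) _ _
    fun s => ?_
  · simp [Finset.mem_finsuppAntidiag, Finsupp.sum_fintype]
  · simp only [Equiv.trans_apply, Equiv.subtypeEquivRight_apply_coe,
      Sym.coe_equivNatSum_apply_apply, Finset.prod_multiset_map_count]
    exact Finset.prod_subset (Finset.subset_univ _) fun i _ hi => by
      rw [Multiset.count_eq_zero_of_notMem (by simpa using hi), pow_zero]

theorem coeff_sum_geomSeries_X_sub_one (n : ℕ) :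
    PowerSeries.coeff n (∑ i : σ, (geomSeries (X i : MvPolynomial σ R) - 1)) =
      if n = 0 then 0 else psum σ R n := by
  simp only [map_sum, map_sub, geomSeries, PowerSeries.coeff_mk, PowerSeries.coeff_one, psum]
  split_ifs <;> simp_all

theorem mul_hsymm_eq_sum [DecidableEq σ] (d : ℕ) :
    (d : MvPolynomial σ R) * hsymm σ R d =
      ∑ j ∈ Finset.Icc 1 d, hsymm σ R (d - j) * psum σ R j := by
  have h := congrArg (PowerSeries.coeff d)
    (PowerSeries.X_mul_derivative_prod_geomSeries Finset.univ (X · : σ → MvPolynomial σ R))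
  rw [PowerSeries.coeff_X_mul_derivative, coeff_prod_geomSeries_X, PowerSeries.coeff_mul,
    Finset.Nat.sum_antidiagonal_eq_sum_range_succ_mk, Finset.sum_range_succ'] at h
  simp only [coeff_sum_geomSeries_X_sub_one, coeff_prod_geomSeries_X] at h
  rw [h, ← Finset.Ico_add_one_right_eq_Icc, Finset.sum_Ico_eq_sum_range]
  simp [add_comm 1, mul_comm]

end MvPolynomial

theorem Nat.odd_choose_mul_two_pow_sub_one {m : ℕ} (hm : 1 ≤ m) {k j : ℕ} (hj : j < 2 ^ k) :
    Odd ((m * 2 ^ k - 1).choose j) := by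
  induction k generalizing j with
  | zero => simp [Nat.lt_one_iff.mp hj]
  | succ k ih =>
    have hpos : 1 ≤ m * 2 ^ k := Nat.mul_pos hm (Nat.two_pow_pos k)
    have hmod : (m * 2 ^ (k + 1) - 1) % 2 = 1 := by rw [pow_succ, ← mul_assoc]; omega
    have hdiv : (m * 2 ^ (k + 1) - 1) / 2 = m * 2 ^ k - 1 := by rw [pow_succ, ← mul_assoc]; omega
    have hlow : Nat.choose 1 (j % 2) = 1 := Nat.choose_eq_one_iff.mpr (by omega)
    have hlucas := Choose.choose_modEq_choose_mod_mul_choose_div_nat (p := 2)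
      (n := m * 2 ^ (k + 1) - 1) (k := j)
    rw [hmod, hdiv, hlow, one_mul] at hlucas
    rw [Nat.odd_iff, hlucas, ← Nat.odd_iff]
    exact ih (by rw [pow_succ] at hj; omega)

theorem stmt_0_general (k m : ℕ) (hk : 1 ≤ k) (hm : 1 ≤ m)
    (n : ℕ) (hn : n = m * 2 ^ k - 1) (d : ℕ) (hd : d < 2 ^ k) (N : ℕ) :
    Ipoly N n d = 0 := by
  have hn_odd : (n : ZMod 2) = 1 := by
    rw [ZMod.natCast_eq_one_iff_odd, hn]
    exact Nat.Even.sub_odd (Nat.mul_pos hm (Nat.two_pow_pos k))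
      ((Nat.even_pow.mpr ⟨even_two, by omega⟩).mul_left m) odd_one
  have hlead : (((n : ℤ) - d + 1 : ℤ) : ZMod 2) = d := by
    push_cast
    rw [hn_odd]
    linear_combination (1 - (d : ZMod 2)) * CharTwo.two_eq_zero (R := ZMod 2)
  have hchoose : ∀ j ∈ Finset.Icc 1 d, ((n.choose j : ℤ) : ZMod 2) = 1 := fun j hj => by
    rw [Int.cast_natCast, ZMod.natCast_eq_one_iff_odd, hn]
    exact Nat.odd_choose_mul_two_pow_sub_one hm ((Finset.mem_Icc.mp hj).2.trans_lt hd)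
  rw [Ipoly, hlead, Finset.sum_congr rfl fun j hj => by rw [hchoose j hj, map_one, one_mul],
    ← mul_hsymm_eq_sum, map_natCast]
  exact CharTwo.add_self_eq_zero _

theorem stmt_0 (k m : ℕ) (hk : 1 ≤ k) (hm : 1 ≤ m) (hmodd : Odd m)
    (n : ℕ) (hn : n = m * 2 ^ k - 1) (d : ℕ) (hd : d < 2 ^ k) (N : ℕ) :
    Ipoly N n d = 0 :=
  stmt_0_general k m hk hm n hn d hd N
end

section
/- Let k ≥ 1 and let m ≥ 1 be odd, and set n = m·2^k − 1. Then for every N, the polynomial I_{n,2^k} is equal to e_1^{2^k} in MvPolynomial (Fin N) (ZMod 2). -/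
/-!
Put `d = 2 ^ k`, so that `n + 1 = m * d`. Modulo 2, Lucas's theorem gives
`C(n, j) ≡ C(m - 1, j / d)`, which is odd for `0 < j < d` and even for `j = d` because `m` is odd;
likewise `n - d + 1 = (m - 1) * d` is even. Hence `I_{n,d} = ∑_{0 < j < d} h_{d-j} p_j`.
Newton's identity for complete homogeneous polynomials, `∑_{j=1}^{d} h_{d-j} p_j = d h_d`,
vanishes in characteristic 2 since `d` is even, so `I_{n,d} = p_d = e_1 ^ d` by Frobenius.
-/

open MvPolynomial

theorem Nat.choose_two_mul_add_one_modEq_two (a j : ℕ) :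
    (2 * a + 1).choose j ≡ a.choose (j / 2) [MOD 2] := by
  have h := Choose.choose_modEq_choose_mod_mul_choose_div_nat (n := 2 * a + 1) (k := j) (p := 2)
  have hone : Nat.choose 1 (j % 2) = 1 := by
    rcases Nat.mod_two_eq_zero_or_one j with h | h <;> simp [h]
  rwa [Nat.mul_add_mod_self_left, Nat.mul_add_div two_pos, hone, one_mul] at h

theorem Nat.choose_mul_two_pow_sub_one_modEq_two {m : ℕ} (hm : 0 < m) (k j : ℕ) :
    (m * 2 ^ k - 1).choose j ≡ (m - 1).choose (j / 2 ^ k) [MOD 2] := by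
  induction k generalizing j with
  | zero => simpa using Nat.ModEq.refl _
  | succ k ih =>
    have hpos : 0 < m * 2 ^ k := by positivity
    have hsplit : m * 2 ^ (k + 1) - 1 = 2 * (m * 2 ^ k - 1) + 1 := by
      rw [pow_succ, ← mul_assoc]; omega
    rw [hsplit, pow_succ', ← Nat.div_div_eq_div_mul]
    exact (choose_two_mul_add_one_modEq_two _ _).trans (ih _)

namespace MvPolynomial

variable {σ R : Type*} [Fintype σ] [DecidableEq σ]

section CommSemiring

variable [CommSemiring R]

theorem X_pow_mul_hsymm_sub {d j : ℕ} (i : σ) (hj : j ≤ d) :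
    X i ^ j * hsymm σ R (d - j) =
      ∑ s : Sym σ d with j ≤ s.1.count i, (s.1.map (X : σ → MvPolynomial σ R)).prod := by
  rw [hsymm, Finset.mul_sum]
  refine Finset.sum_bij'
    (fun t _ => Sym.mk (t.1 + Multiset.replicate j i) (by simp [Nat.sub_add_cancel hj]))
    (fun s hs => Sym.mk (s.1 - Multiset.replicate j i) ?_) ?_ ?_ ?_ ?_ ?_
  · rw [Finset.mem_filter] at hs
    rw [Multiset.card_sub (Multiset.le_count_iff_replicate_le.mp hs.2)]
    simp
  · intro t _
    simp only [Finset.mem_filter, Finset.mem_univ, true_and]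
    simp
  · intro s _
    exact Finset.mem_univ _
  · intro t _
    ext1
    simp
  · intro s hs
    rw [Finset.mem_filter] at hs
    ext1
    exact tsub_add_cancel_of_le (Multiset.le_count_iff_replicate_le.mp hs.2)
  · intro t _
    simp [Multiset.prod_replicate, mul_comm]

theorem sum_hsymm_mul_psum (d : ℕ) :
    ∑ j ∈ Finset.Icc 1 d, hsymm σ R (d - j) * psum σ R j = d • hsymm σ R d := by
  let x : Sym σ d → MvPolynomial σ R := fun s => (s.1.map X).prod
  calc ∑ j ∈ Finset.Icc 1 d, hsymm σ R (d - j) * psum σ R j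
      = ∑ i, ∑ j ∈ Finset.Icc 1 d, X i ^ j * hsymm σ R (d - j) := by
        simp_rw [psum, Finset.mul_sum, mul_comm (hsymm σ R _)]
        exact Finset.sum_comm
    _ = ∑ i, ∑ j ∈ Finset.Icc 1 d, ∑ s : Sym σ d with j ≤ s.1.count i, x s := by
        refine Finset.sum_congr rfl fun i _ => Finset.sum_congr rfl fun j hj => ?_
        exact X_pow_mul_hsymm_sub i (Finset.mem_Icc.1 hj).2
    _ = ∑ i, ∑ s : Sym σ d, s.1.count i • x s := by
        refine Finset.sum_congr rfl fun i _ => ?_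
        simp_rw [Finset.sum_filter]
        rw [Finset.sum_comm]
        refine Finset.sum_congr rfl fun s _ => ?_
        have hcount :
            (Finset.Icc 1 d).filter (· ≤ s.1.count i) = Finset.Icc 1 (s.1.count i) := by
          have := s.2 ▸ Multiset.count_le_card i s.1
          ext j; simp only [Finset.mem_filter, Finset.mem_Icc]; omega
        rw [← Finset.sum_filter, hcount, Finset.sum_const, Nat.card_Icc, Nat.add_sub_cancel]
    _ = ∑ s : Sym σ d, d • x s := by
        rw [Finset.sum_comm]
        refine Finset.sum_congr rfl fun s _ => ?_
        rw [← Finset.sum_smul, Multiset.sum_count_eq_card (fun i _ => Finset.mem_univ i), s.2]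
    _ = d • hsymm σ R d := by rw [hsymm, Finset.smul_sum]

end CommSemiring

theorem sum_Ico_hsymm_mul_psum_of_even [CommRing R] [CharP R 2] {d : ℕ} (hd : Even d)
    (hd0 : 0 < d) : ∑ j ∈ Finset.Ico 1 d, hsymm σ R (d - j) * psum σ R j = psum σ R d := by
  have h := sum_hsymm_mul_psum (σ := σ) (R := R) d
  rw [← Finset.Ico_insert_right hd0, Finset.sum_insert Finset.right_notMem_Ico, Nat.sub_self,
    hsymm_zero, one_mul, nsmul_eq_mul, (CharP.cast_eq_zero_iff _ 2 d).2 hd.two_dvd, zero_mul] at h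
  rw [CharTwo.add_eq_iff_eq_add, zero_add] at h
  exact h.symm

end MvPolynomial

open Finset in
theorem stmt_1_general (k m : ℕ) (hk : 1 ≤ k) (hmodd : Odd m)
    (n : ℕ) (hn : n = m * 2 ^ k - 1) (N : ℕ) :
    Ipoly N n (2 ^ k) = (esymm (Fin N) (ZMod 2) 1) ^ (2 ^ k) := by
  have hm : 0 < m := hmodd.pos
  have hd : 0 < 2 ^ k := by positivity
  have hchoose (j : ℕ) : ((n.choose j : ℤ) : ZMod 2) = (m - 1).choose (j / 2 ^ k) := by
    rw [Int.cast_natCast, ZMod.natCast_eq_natCast_iff, hn]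
    exact Nat.choose_mul_two_pow_sub_one_modEq_two hm k j
  have hlead : (((n : ℤ) - ((2 ^ k : ℕ) : ℤ) + 1 : ℤ) : ZMod 2) = 0 := by
    have hn1 : (n : ℤ) + 1 = m * 2 ^ k := by
      rw [hn, Nat.cast_sub (Nat.mul_pos hm hd)]; push_cast; ring
    have : (n : ℤ) - ((2 ^ k : ℕ) : ℤ) + 1 = ((m : ℤ) - 1) * 2 ^ k := by
      push_cast; linear_combination hn1
    rw [this]; push_cast
    rw [ZMod.natCast_eq_one_iff_odd.2 hmodd, sub_self, zero_mul]
  have htop : ((n.choose (2 ^ k) : ℤ) : ZMod 2) = 0 := by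
    rw [hchoose, Nat.div_self hd, Nat.choose_one_right]
    exact ZMod.natCast_eq_zero_iff_even.2 (Nat.Odd.sub_odd hmodd odd_one)
  have hlow : ∀ j ∈ Ico 1 (2 ^ k), ((n.choose j : ℤ) : ZMod 2) = 1 := fun j hj => by
    rw [hchoose, Nat.div_eq_of_lt (mem_Ico.1 hj).2, Nat.choose_zero_right, Nat.cast_one]
  rw [Ipoly, hlead, ← Ico_insert_right hd, sum_insert right_notMem_Ico, htop,
    sum_congr rfl fun j hj => by rw [hlow j hj, map_one, one_mul],
    sum_Ico_hsymm_mul_psum_of_even ((Nat.even_pow' (by omega)).2 even_two) hd,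
    esymm_one, psum, sum_pow_char_pow]
  simp only [map_zero, zero_mul, zero_add]

theorem stmt_1 (k m : ℕ) (hk : 1 ≤ k) (hm : 1 ≤ m) (hmodd : Odd m)
    (n : ℕ) (hn : n = m * 2 ^ k - 1) (N : ℕ) :
    Ipoly N n (2 ^ k) = (esymm (Fin N) (ZMod 2) 1) ^ (2 ^ k) :=
  stmt_1_general k m hk hmodd n hn N
end

section
/- Let d be a natural number and let q ≥ 1 be such that 2^q > d. Then for every natural number n and every N, the polynomials I_{n+2^q, d} and I_{n, d} are equal in MvPolynomial (Fin N) (ZMod 2); that is, as a function of n, the expression I_{n,d} is periodic with period 2^q whenever 2^q > d and q > 0. -/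
open MvPolynomial

/-! Shifting `n` by `2^q` leaves `n - d + 1` unchanged mod 2 (as `q ≥ 1`), and leaves
`C(n, j)` unchanged mod 2 for `j ≤ d < 2^q`: by Vandermonde,
`C(n + p^q, j) = ∑ C(n, i) C(p^q, j - i)`, and `p ∣ C(p^q, k)` for `0 < k < p^q`. -/

theorem natCast_choose_add_prime_pow {p : ℕ} [hp : Fact p.Prime] {q j : ℕ} (n : ℕ)
    (hj : j < p ^ q) : (((n + p ^ q).choose j : ℕ) : ZMod p) = n.choose j := by
  rw [Nat.add_choose_eq, Nat.cast_sum, Finset.sum_eq_single (j, 0)]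
  · simp
  · rintro ⟨i, k⟩ hik hne
    have hk : k ≠ 0 := by
      rintro rfl
      simp_all
    have hkj : k ≤ j := by
      rw [Finset.HasAntidiagonal.mem_antidiagonal] at hik
      omega
    rw [Nat.cast_mul, (ZMod.natCast_eq_zero_iff _ _).2 (hp.out.dvd_choose_pow hk (by omega)),
      mul_zero]
  · simp

theorem stmt_5 (d q : ℕ) (hq : 1 ≤ q) (hd : d < 2 ^ q) (n N : ℕ) :
    Ipoly N (n + 2 ^ q) d = Ipoly N n d := by
  have h2q : (2 : ZMod 2) ^ q = 0 := by
    rw [show (2 : ZMod 2) = 0 by decide, zero_pow (by omega)]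
  unfold Ipoly
  refine congrArg₂ (· + ·) ?_ (Finset.sum_congr rfl fun j hj => ?_)
  · push_cast
    rw [h2q, add_zero]
  · rw [Int.cast_natCast, Int.cast_natCast,
      natCast_choose_add_prime_pow n ((Finset.mem_Icc.1 hj).2.trans_lt hd)]
end

section
/- Let q ≥ 1 and let j be a natural number with 1 ≤ j < 2^q. Then for every natural number n, the binomial coefficients C(n + 2^q, j) and C(n, j) are congruent modulo 2. -/
lemma aux_choose_period (q : ℕ) : ∀ j n : ℕ, j < 2 ^ q →
    (n + 2 ^ q).choose j ≡ n.choose j [MOD 2] := by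
  induction q with
  | zero =>
    intro j n hj
    interval_cases j
    simp [Nat.ModEq]
  | succ q ih =>
    intro j n hj
    have h2 : Fact (Nat.Prime 2) := ⟨Nat.prime_two⟩
    have L1 := Choose.choose_modEq_choose_mod_mul_choose_div_nat (p := 2) (n := n + 2 ^ (q+1)) (k := j)
    have L2 := Choose.choose_modEq_choose_mod_mul_choose_div_nat (p := 2) (n := n) (k := j)
    have hmod : (n + 2 ^ (q+1)) % 2 = n % 2 := by
      omega
    have hdiv : (n + 2 ^ (q+1)) / 2 = n / 2 + 2 ^ q := by
      rw [pow_succ]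
      omega
    have hjq : j / 2 < 2 ^ q := by
      rw [pow_succ] at hj; omega
    have := ih (j / 2) (n / 2) hjq
    calc (n + 2 ^ (q+1)).choose j
        ≡ ((n + 2 ^ (q+1)) % 2).choose (j % 2) * ((n + 2 ^ (q+1)) / 2).choose (j / 2) [MOD 2] := L1
      _ = (n % 2).choose (j % 2) * (n / 2 + 2 ^ q).choose (j / 2) := by rw [hmod, hdiv]
      _ ≡ (n % 2).choose (j % 2) * (n / 2).choose (j / 2) [MOD 2] := (Nat.ModEq.refl _).mul this
      _ ≡ n.choose j [MOD 2] := L2.symm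

theorem stmt_6 (q j : ℕ) (hq : 1 ≤ q) (hj1 : 1 ≤ j) (hj : j < 2 ^ q) (n : ℕ) :
    (n + 2 ^ q).choose j ≡ n.choose j [MOD 2] := by
  exact aux_choose_period q j n hj
end

section
/- Let n, d, j be natural numbers with d ≥ 1, 0 ≤ j < d, and n ≥ 2d − 1. Then in the polynomial ring (MvPolynomial (Fin N) (ZMod 2))[c] (polynomials in one variable c with coefficients in MvPolynomial (Fin N) (ZMod 2)), there exists a polynomial r with degree in c strictly less than n − d such that (Σ_{k=0}^{d−j−1} h_k·c^{d−j−1−k}) · (Σ_{k=0}^{d} e_k·c^{n−d+1−k}) = c^{n−j} + h_{d−j}·c^{n−d} + r. In other words, modulo the relation Σ_{k=0}^{d} e_k·c^{n−d+1−k} = 0, the monomial c^{n−j} equals h_{d−j}·c^{n−d} plus terms of lower degree in c. -/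
/-!
Write `H(t) = ∑ hₖ tᵏ = ∏ 1 / (1 - xᵢ t)` and `E(t) = ∑ eₖ tᵏ`, so that `E(-t) = ∏ (1 - xᵢ t)`
is the inverse of `H(t)`; in characteristic 2 this says `H E = 1`. With `s = d - j - 1`, the
left-hand side is `c ^ (n + 1 - 2d)` times the reflection `c ^ (s + d) P(1/c) Q(1/c)` of the
truncations `P = H mod t ^ (s + 1)` and `Q = E mod t ^ (d + 1)`. Up to degree `s + 1 ≤ d`,
`P Q` agrees with `(H - h_{s+1} t ^ (s + 1)) E = 1 + h_{s+1} t ^ (s + 1)`, and reflection turns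
these two terms into `c ^ (s + d) + h_{s+1} c ^ (d - 1)` and the rest into terms of degree
below `d - 1`.
-/

open Finset Polynomial

namespace PowerSeries

variable {R : Type*} [CommSemiring R]

theorem rescale_C (a c : R) : rescale a (C c) = C c := by
  ext n
  simp only [coeff_rescale, coeff_C]
  split_ifs with hn <;> simp [hn]

theorem mk_pow_mul_one_sub_C_mul_X {S : Type*} [CommRing S] (x : S) :
    mk (x ^ ·) * (1 - C x * X) = 1 := by
  simpa [rescale_mk, rescale_X] using congrArg (rescale x) (mk_one_mul_one_sub_eq_one S)

end PowerSeries

namespace MvPolynomial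

variable (σ R : Type*) [Fintype σ]

section CommSemiring

variable [CommSemiring R]

theorem prod_one_add_C_X_mul_X_eq_mk_esymm :
    ∏ i, (1 + PowerSeries.C (X i : MvPolynomial σ R) * PowerSeries.X) =
      PowerSeries.mk (esymm σ R) := by
  refine PowerSeries.ext fun m => ?_
  rw [prod_one_add, map_sum, PowerSeries.coeff_mk, esymm, powersetCard_eq_filter, sum_filter]
  refine sum_congr rfl fun t _ => ?_
  rw [prod_mul_distrib, prod_const, ← map_prod, PowerSeries.coeff_C_mul_X_pow]
  exact if_congr eq_comm rfl rfl

theorem prod_mk_X_pow_eq_mk_hsymm [DecidableEq σ] :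
    ∏ i, PowerSeries.mk (X i ^ · : ℕ → MvPolynomial σ R) = PowerSeries.mk (hsymm σ R) := by
  refine PowerSeries.ext fun m => ?_
  simp only [PowerSeries.coeff_prod, PowerSeries.coeff_mk, hsymm]
  symm
  refine sum_bij (fun s _ => Multiset.toFinsupp s.1) (fun s _ => ?_) (fun s _ t _ h => ?_)
    (fun l hl => ?_) (fun s _ => ?_)
  · rw [mem_finsuppAntidiag]
    refine ⟨?_, subset_univ _⟩
    change ∑ i, (s : Multiset σ).count i = m
    rw [Multiset.sum_count_eq_card fun _ _ => mem_univ _]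
    exact s.2
  · exact Sym.coe_injective (Multiset.toFinsupp.injective h)
  · rw [mem_finsuppAntidiag] at hl
    refine ⟨⟨Finsupp.toMultiset l, ?_⟩, mem_univ _, by simp⟩
    rw [Finsupp.card_toMultiset, ← hl.1, Finsupp.sum_fintype _ _ (fun _ => rfl)]
    rfl
  · rw [prod_multiset_map_count]
    refine prod_subset (subset_univ _) fun i _ hi => ?_
    rw [Multiset.count_eq_zero.mpr (by simpa using hi), pow_zero]

end CommSemiring

variable [CommRing R] [DecidableEq σ]

theorem mk_hsymm_mul_mk_neg_one_pow_mul_esymm :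
    PowerSeries.mk (hsymm σ R) * PowerSeries.mk (fun k => (-1) ^ k * esymm σ R k) = 1 := by
  rw [← PowerSeries.rescale_mk, ← prod_mk_X_pow_eq_mk_hsymm,
    ← prod_one_add_C_X_mul_X_eq_mk_esymm, map_prod, ← prod_mul_distrib]
  refine prod_eq_one fun i _ => ?_
  rw [map_add, map_one, map_mul, PowerSeries.rescale_C, PowerSeries.rescale_X, map_neg, map_one,
    neg_one_mul, mul_neg, ← sub_eq_add_neg, PowerSeries.mk_pow_mul_one_sub_C_mul_X]

theorem mk_hsymm_mul_mk_esymm [CharP R 2] :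
    PowerSeries.mk (hsymm σ R) * PowerSeries.mk (esymm σ R) = 1 := by
  simpa [CharTwo.neg_eq] using mk_hsymm_mul_mk_neg_one_pow_mul_esymm σ R

end MvPolynomial

namespace Polynomial

variable {R : Type*}

section Semiring

variable [Semiring R]

theorem sum_C_mul_X_pow_sub_eq_reflect (f : ℕ → R) (n : ℕ) :
    ∑ k ∈ range (n + 1), C (f k) * X ^ (n - k) =
      reflect n (PowerSeries.trunc (n + 1) (PowerSeries.mk f)) := by
  ext u
  rw [coeff_reflect, PowerSeries.coeff_trunc, finsetSum_coeff]
  simp only [coeff_C_mul_X_pow]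
  rcases le_or_gt u n with hu | hu
  · rw [revAt_le hu, if_pos (by omega), PowerSeries.coeff_mk,
      sum_congr rfl fun k hk =>
        if_congr (show u = n - k ↔ k = n - u by rw [mem_range] at hk; omega) rfl rfl,
      sum_ite_eq']
    exact if_pos (mem_range.mpr (by omega))
  · rw [revAt_eq_self_of_lt hu, if_neg (by omega)]
    exact sum_eq_zero fun k _ => if_neg (by omega)

theorem degree_reflect_lt_of_coeff_eq_zero {p : R[X]} {N k : ℕ} (hp : p.natDegree ≤ N)
    (hk : ∀ m ≤ k, p.coeff m = 0) : (reflect N p).degree < ↑(N - k) := by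
  rw [degree_lt_iff_coeff_zero]
  intro t ht
  rw [coeff_reflect]
  rcases le_or_gt t N with htN | htN
  · rw [revAt_le htN]
    exact hk _ (by omega)
  · rw [revAt_eq_self_of_lt htN]
    exact coeff_eq_zero_of_natDegree_lt (by omega)

theorem sum_C_mul_X_pow_add_sub (f : ℕ → R) (l d : ℕ) :
    ∑ k ∈ range (d + 1), C (f k) * X ^ (l + d - k) =
      X ^ l * ∑ k ∈ range (d + 1), C (f k) * X ^ (d - k) := by
  rw [mul_sum]
  refine sum_congr rfl fun k hk => ?_
  rw [Nat.add_sub_assoc (Nat.lt_succ_iff.mp (mem_range.mp hk)), pow_add]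
  exact ((commute_X_pow _ _).left_comm _).symm

end Semiring

variable [CommRing R]

open PowerSeries in
theorem coeff_trunc_mul_trunc_of_mk_mul_mk_eq_one {h e : ℕ → R} (hhe : mk h * mk e = 1)
    (he : e 0 = 1) {s d m : ℕ} (hsd : s < d) (hm : m ≤ s + 1) :
    (trunc (s + 1) (mk h) * trunc (d + 1) (mk e)).coeff m =
      (1 - Polynomial.C (h (s + 1)) * Polynomial.X ^ (s + 1)).coeff m := by
  have hinv : ∑ k ∈ range (m + 1), h k * e (m - k) = if m = 0 then 1 else 0 := by
    simpa [PowerSeries.coeff_mul, Nat.sum_antidiagonal_eq_sum_range_succ_mk] using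
      congrArg (PowerSeries.coeff m) hhe
  have hterm : ∀ k ∈ range (m + 1),
      (trunc (s + 1) (mk h)).coeff k * (trunc (d + 1) (mk e)).coeff (m - k) =
        h k * e (m - k) - if k = s + 1 then h (s + 1) else 0 := by
    intro k hk
    rw [mem_range] at hk
    rw [coeff_trunc, coeff_trunc, coeff_mk, coeff_mk, if_pos (by omega : m - k < d + 1)]
    split_ifs with hks hk hk
    · omega
    · rw [sub_zero]
    · rw [zero_mul, hk, show m - (s + 1) = 0 by omega, he, mul_one, sub_self]
    · omega
  rw [Polynomial.coeff_mul, Nat.sum_antidiagonal_eq_sum_range_succ_mk, sum_congr rfl hterm,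
    sum_sub_distrib, hinv, sum_ite_eq', Polynomial.coeff_sub, Polynomial.coeff_one,
    Polynomial.coeff_C_mul_X_pow]
  exact congrArg _ (if_congr (by rw [mem_range]; omega) rfl rfl)

theorem exists_degree_lt_sum_mul_sum_eq {h e : ℕ → R}
    (hhe : PowerSeries.mk h * PowerSeries.mk e = 1) (he : e 0 = 1) {s d : ℕ} (hsd : s < d) :
    ∃ r : R[X], r.degree < ↑(d - 1) ∧
      (∑ k ∈ range (s + 1), C (h k) * X ^ (s - k)) *
          (∑ k ∈ range (d + 1), C (e k) * X ^ (d - k)) =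
        X ^ (s + d) - C (h (s + 1)) * X ^ (d - 1) + r := by
  set P := PowerSeries.trunc (s + 1) (PowerSeries.mk h)
  set Q := PowerSeries.trunc (d + 1) (PowerSeries.mk e)
  have hP : P.natDegree ≤ s := Nat.lt_succ_iff.mp (PowerSeries.natDegree_trunc_lt _ _)
  have hQ : Q.natDegree ≤ d := Nat.lt_succ_iff.mp (PowerSeries.natDegree_trunc_lt _ _)
  have hdeg : (P * Q - (1 - C (h (s + 1)) * X ^ (s + 1))).natDegree ≤ s + d := by
    refine (natDegree_sub_le _ _).trans (max_le (natDegree_mul_le_of_le hP hQ) ?_)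
    refine (natDegree_sub_le _ _).trans (max_le (by simp) ?_)
    exact (natDegree_C_mul_X_pow_le _ _).trans (by omega)
  refine ⟨reflect (s + d) (P * Q - (1 - C (h (s + 1)) * X ^ (s + 1))), ?_, ?_⟩
  · rw [show d - 1 = s + d - (s + 1) by omega]
    refine degree_reflect_lt_of_coeff_eq_zero hdeg fun m hm => ?_
    rw [coeff_sub, coeff_trunc_mul_trunc_of_mk_mul_mk_eq_one hhe he hsd hm, sub_self]
  · rw [sum_C_mul_X_pow_sub_eq_reflect, sum_C_mul_X_pow_sub_eq_reflect, ← reflect_mul _ _ hP hQ,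
      reflect_sub, reflect_sub, reflect_one, reflect_C_mul_X_pow, revAt_le (by omega),
      show s + d - (s + 1) = d - 1 by omega]
    ring

end Polynomial

theorem stmt_8_general (N n d j : ℕ) (hj : j < d) (hn : 2 * d - 1 ≤ n) :
    ∃ r : Polynomial (MvPolynomial (Fin N) (ZMod 2)),
      r.degree < ((n - d : ℕ) : WithBot ℕ) ∧
      (∑ k ∈ Finset.range (d - j),
          Polynomial.C (MvPolynomial.hsymm (Fin N) (ZMod 2) k) *
            Polynomial.X ^ (d - j - 1 - k)) *
        (∑ k ∈ Finset.range (d + 1),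
          Polynomial.C (MvPolynomial.esymm (Fin N) (ZMod 2) k) *
            Polynomial.X ^ (n - d + 1 - k)) =
      Polynomial.X ^ (n - j) +
        Polynomial.C (MvPolynomial.hsymm (Fin N) (ZMod 2) (d - j)) *
          Polynomial.X ^ (n - d) + r := by
  set s := d - j - 1
  set l := n + 1 - 2 * d
  obtain ⟨r₀, hr₀, hprod⟩ := exists_degree_lt_sum_mul_sum_eq
    (MvPolynomial.mk_hsymm_mul_mk_esymm (Fin N) (ZMod 2)) (MvPolynomial.esymm_zero _ _)
    (show s < d by omega)
  refine ⟨r₀ * X ^ l, ?_, ?_⟩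
  · rw [degree_mul_X_pow, show n - d = d - 1 + l by omega, Nat.cast_add]
    exact WithBot.add_lt_add_right WithBot.coe_ne_bot hr₀
  · rw [show d - j = s + 1 by omega, show n - d + 1 = l + d by omega, sum_C_mul_X_pow_add_sub,
      mul_left_comm, hprod, show n - j = l + (s + d) by omega, show n - d = l + (d - 1) by omega,
      CharTwo.sub_eq_add]
    ring

theorem stmt_8 (N n d j : ℕ) (hd : 1 ≤ d) (hj : j < d) (hn : 2 * d - 1 ≤ n) :
    ∃ r : Polynomial (MvPolynomial (Fin N) (ZMod 2)),
      r.degree < ((n - d : ℕ) : WithBot ℕ) ∧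
      (∑ k ∈ Finset.range (d - j),
          Polynomial.C (MvPolynomial.hsymm (Fin N) (ZMod 2) k) *
            Polynomial.X ^ (d - j - 1 - k)) *
        (∑ k ∈ Finset.range (d + 1),
          Polynomial.C (MvPolynomial.esymm (Fin N) (ZMod 2) k) *
            Polynomial.X ^ (n - d + 1 - k)) =
      Polynomial.X ^ (n - j) +
        Polynomial.C (MvPolynomial.hsymm (Fin N) (ZMod 2) (d - j)) *
          Polynomial.X ^ (n - d) + r :=
  stmt_8_general N n d j hj hn
end

section
/- Let K be a number field with ring of integers R, let m ≥ 1, and let J be an m×m matrix over K. Then for every P ∈ O(J,K), the subgroups O(J,R) and P⁻¹·O(J,R)·P of GL(Fin m, K) are commensurable. -/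
open Matrix NumberField

variable {K : Type*} [Field K] [NumberField K] {m : ℕ}

/-- `O(J,K)`: the subgroup of `GL (Fin m) K` of elements `g` with `gᵀ · J · g = J`. -/
def OJK (J : Matrix (Fin m) (Fin m) K) : Subgroup (GL (Fin m) K) where
  carrier := {g | (↑g : Matrix (Fin m) (Fin m) K)ᵀ * J * (↑g : Matrix (Fin m) (Fin m) K) = J}
  one_mem' := by simp
  mul_mem' := by
    intro a b ha hb
    simp only [Set.mem_setOf_eq, Units.val_mul, transpose_mul] at *
    calc (↑b : Matrix (Fin m) (Fin m) K)ᵀ * (↑a : Matrix (Fin m) (Fin m) K)ᵀ * J *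
          ((↑a : Matrix (Fin m) (Fin m) K) * (↑b : Matrix (Fin m) (Fin m) K))
        = (↑b : Matrix (Fin m) (Fin m) K)ᵀ *
            (((↑a : Matrix (Fin m) (Fin m) K)ᵀ * J * (↑a : Matrix (Fin m) (Fin m) K)) *
              (↑b : Matrix (Fin m) (Fin m) K)) := by
          simp only [mul_assoc]
      _ = J := by rw [ha, ← mul_assoc]; exact hb
  inv_mem' := by
    intro a ha
    simp only [Set.mem_setOf_eq] at *
    conv_lhs => rw [← ha]
    calc (↑a⁻¹ : Matrix (Fin m) (Fin m) K)ᵀ *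
          ((↑a : Matrix (Fin m) (Fin m) K)ᵀ * J * (↑a : Matrix (Fin m) (Fin m) K)) *
            (↑a⁻¹ : Matrix (Fin m) (Fin m) K)
        = ((↑a : Matrix (Fin m) (Fin m) K) * (↑a⁻¹ : Matrix (Fin m) (Fin m) K))ᵀ *
            (J * ((↑a : Matrix (Fin m) (Fin m) K) * (↑a⁻¹ : Matrix (Fin m) (Fin m) K))) := by
          rw [transpose_mul]; simp only [mul_assoc]
      _ = J := by rw [Units.mul_inv]; simp

/-- `O(J,R)`: the subgroup of `O(J,K)` of elements `g` all of whose entries, and all of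
whose inverse's entries, are integral (lie in the image of the ring of integers `𝓞 K`). -/
def OJR (J : Matrix (Fin m) (Fin m) K) : Subgroup (GL (Fin m) K) where
  carrier := {g | g ∈ OJK J ∧
    (∀ i j, (↑g : Matrix (Fin m) (Fin m) K) i j ∈ (algebraMap (𝓞 K) K).range) ∧
    (∀ i j, (↑g⁻¹ : Matrix (Fin m) (Fin m) K) i j ∈ (algebraMap (𝓞 K) K).range)}
  one_mem' := by
    have h : ∀ i j : Fin m,
        (1 : Matrix (Fin m) (Fin m) K) i j ∈ (algebraMap (𝓞 K) K).range := by
      intro i j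
      rw [Matrix.one_apply]
      split
      · exact one_mem _
      · exact zero_mem _
    exact ⟨(OJK J).one_mem,
      fun i j => by simpa only [Units.val_one] using h i j,
      fun i j => by simpa only [inv_one, Units.val_one] using h i j⟩
  mul_mem' := by
    rintro a b ⟨haO, haE, haE'⟩ ⟨hbO, hbE, hbE'⟩
    refine ⟨(OJK J).mul_mem haO hbO, ?_, ?_⟩ <;> intro i j
    · rw [Units.val_mul, Matrix.mul_apply]
      exact sum_mem fun k _ => mul_mem (haE i k) (hbE k j)
    · rw [_root_.mul_inv_rev, Units.val_mul, Matrix.mul_apply]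
      exact sum_mem fun k _ => mul_mem (hbE' i k) (haE' k j)
  inv_mem' := by
    rintro a ⟨haO, haE, haE'⟩
    exact ⟨(OJK J).inv_mem haO, haE', by simp only [inv_inv]; exact haE⟩

/-! If `d ∈ R` clears the denominators of `Q` and `Q⁻¹`, then `Q⁻¹ g Q` is integral for every
integral `g ≡ 1 mod d²`. Since `R ⧸ (d²)` is finite, the integral matrices fall into finitely many
classes modulo `d²`, so `GL_m(R) ∩ Q GL_m(R) Q⁻¹` has finite index in `GL_m(R)`: every element of
`GL_m(K)` commensurates `GL_m(R)`. Intersecting with `O(J,K)`, which `P` normalises, gives the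
theorem because `O(J,R) = O(J,K) ∩ GL_m(R)`. -/

open scoped Pointwise

namespace Subgroup

variable {G : Type*} [Group G]

theorem map_mulAutConj_eq_toConjAct_smul (H : Subgroup G) (g : G) :
    H.map (MulAut.conj g).toMonoidHom = ConjAct.toConjAct g • H :=
  rfl

theorem mem_toConjAct_smul_iff {H : Subgroup G} {g x : G} :
    x ∈ ConjAct.toConjAct g • H ↔ g⁻¹ * x * g ∈ H := by
  simp [mem_pointwise_smul_iff_inv_smul_mem, ConjAct.smul_def]

theorem relIndex_ne_zero_of_inv_mul_mem_of_eq {α : Type*} [Finite α] {H K : Subgroup G}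
    (f : K → α) (hf : ∀ x y : K, f x = f y → (x⁻¹ * y : G) ∈ H) : H.relIndex K ≠ 0 := by
  rw [relIndex, index_ne_zero_iff_finite]
  refine Finite.of_injective (fun q : K ⧸ H.subgroupOf K => f q.out) fun q q' hq => ?_
  rw [← q.out_eq', ← q'.out_eq', QuotientGroup.eq, mem_subgroupOf]
  exact hf _ _ hq

theorem Commensurable.toConjAct_smul_inf {H L : Subgroup G} {g : G} (hg : g ∈ L)
    (h : Commensurable (ConjAct.toConjAct g • H) H) :
    Commensurable (ConjAct.toConjAct g • (L ⊓ H)) (L ⊓ H) := by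
  rw [smul_inf, conjAct_pointwise_smul_eq_self (le_normalizer hg), inf_comm L, inf_comm L]
  exact ⟨relIndex_inter_ne_zero h.1 L, relIndex_inter_ne_zero h.2 L⟩

end Subgroup

namespace Matrix

theorem exists_eq_add_smul_of_map_mk_eq {R ι κ : Type*} [CommRing R] {e : R}
    {A B : Matrix ι κ R}
    (h : A.map (Ideal.Quotient.mk (Ideal.span {e})) = B.map (Ideal.Quotient.mk _)) :
    ∃ E : Matrix ι κ R, B = A + e • E := by
  have hmem i j : B i j - A i j ∈ Ideal.span {e} :=
    Ideal.Quotient.eq.mp (congrFun (congrFun h i) j).symm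
  choose E hE using fun i j => Ideal.mem_span_singleton'.mp (hmem i j)
  refine ⟨of E, ext fun i j => ?_⟩
  simp only [add_apply, smul_apply, of_apply, smul_eq_mul]
  linear_combination -(hE i j)

variable {R F : Type*} [CommRing R] [Field F] [Algebra R F]
  {n : Type*} [Fintype n] [DecidableEq n]

theorem exists_map_eq_of_mem_matrix {A : Matrix n n F}
    (hA : A ∈ (algebraMap R F).range.matrix) : ∃ B : Matrix n n R, B.map (algebraMap R F) = A :=
  ⟨fun i j => (hA i j).choose, ext fun i j => (hA i j).choose_spec⟩

theorem exists_smul_mem_matrix [IsFractionRing R F] {ι : Type*} [Finite ι]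
    (A : ι → Matrix n n F) :
    ∃ d ∈ nonZeroDivisors R, ∀ k, algebraMap R F d • A k ∈ (algebraMap R F).range.matrix := by
  obtain ⟨d, hd⟩ := IsLocalization.exist_integer_multiples_of_finite (nonZeroDivisors R)
    fun p : ι × n × n => A p.1 p.2.1 p.2.2
  refine ⟨d, d.2, fun k i j => ?_⟩
  obtain ⟨r, hr⟩ := hd (k, i, j)
  exact ⟨r, by simpa [Algebra.smul_def] using hr⟩

end Matrix

namespace Subring

variable {F : Type*} [CommRing F] {n : Type*} [Fintype n] [DecidableEq n]

theorem conj_mem_matrix_of_eq_one_add_smul {S : Subring F} {c : F} {Q g : GL n F}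
    (hQ : c • (Q : Matrix n n F) ∈ S.matrix) (hQinv : c • (↑Q⁻¹ : Matrix n n F) ∈ S.matrix)
    {E : Matrix n n F} (hE : E ∈ S.matrix) (hg : (g : Matrix n n F) = 1 + (c * c) • E) :
    (↑(Q⁻¹ * g * Q) : Matrix n n F) ∈ S.matrix := by
  have : (↑(Q⁻¹ * g * Q) : Matrix n n F) =
      1 + c • (↑Q⁻¹ : Matrix n n F) * E * (c • (Q : Matrix n n F)) := by
    rw [Units.val_mul, Units.val_mul, hg, mul_add, add_mul, mul_one, Units.inv_mul]
    simp [smul_smul, Matrix.mul_assoc]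
  rw [this]
  exact add_mem (one_mem _) (mul_mem (mul_mem hQinv hE) hQ)

theorem conj_inv_mul_mem_units_matrix {S : Subring F} {c : F} {Q x y : GL n F}
    (hQ : c • (Q : Matrix n n F) ∈ S.matrix) (hQinv : c • (↑Q⁻¹ : Matrix n n F) ∈ S.matrix)
    (hx : x ∈ S.matrix.toSubmonoid.units) (hy : y ∈ S.matrix.toSubmonoid.units)
    {E : Matrix n n F} (hE : E ∈ S.matrix) (hxy : (y : Matrix n n F) = x + (c * c) • E) :
    Q⁻¹ * (x⁻¹ * y) * Q ∈ S.matrix.toSubmonoid.units := by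
  have inv_mul_eq {z w : GL n F} {D : Matrix n n F} (h : (w : Matrix n n F) = z + (c * c) • D) :
      (↑(z⁻¹ * w) : Matrix n n F) = 1 + (c * c) • ((↑z⁻¹ : Matrix n n F) * D) := by
    rw [Units.val_mul, h, mul_add, Units.inv_mul, mul_smul_comm]
  refine (Submonoid.mem_units_iff _ _).2 ⟨?_, ?_⟩
  · exact conj_mem_matrix_of_eq_one_add_smul hQ hQinv (mul_mem hx.2 hE) (inv_mul_eq hxy)
  · rw [show (Q⁻¹ * (x⁻¹ * y) * Q)⁻¹ = Q⁻¹ * (y⁻¹ * x) * Q by group]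
    refine conj_mem_matrix_of_eq_one_add_smul hQ hQinv (mul_mem hy.2 (neg_mem hE)) ?_
    exact inv_mul_eq (by rw [hxy, smul_neg, add_neg_cancel_right])

end Subring

section IntegralGL

variable (R F : Type*) [CommRing R] [Field F] [Algebra R F] (n : Type*) [Fintype n] [DecidableEq n]

def integralGL : Subgroup (GL n F) :=
  ((algebraMap R F).range.matrix).toSubmonoid.units

variable {R F n} [IsDomain R] [Ring.HasFiniteQuotients R] [IsFractionRing R F]

theorem relIndex_toConjAct_smul_integralGL_ne_zero (Q : GL n F) :
    (ConjAct.toConjAct Q • integralGL R F n).relIndex (integralGL R F n) ≠ 0 := by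
  obtain ⟨d, hd, hdQ⟩ := Matrix.exists_smul_mem_matrix (R := R) ![(Q : Matrix n n F), ↑Q⁻¹]
  have hI : Ideal.span {d * d} ≠ ⊥ := by
    simpa using mul_ne_zero (nonZeroDivisors.ne_zero hd) (nonZeroDivisors.ne_zero hd)
  have := Ring.HasFiniteQuotients.finiteQuotient hI
  choose lift hlift using fun x : integralGL R F n =>
    Matrix.exists_map_eq_of_mem_matrix (A := ((x : GL n F) : Matrix n n F)) x.2.1
  refine Subgroup.relIndex_ne_zero_of_inv_mul_mem_of_eq
    (fun x => (lift x).map (Ideal.Quotient.mk (Ideal.span {d * d}))) fun x y hxy => ?_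
  obtain ⟨E, hE⟩ := Matrix.exists_eq_add_smul_of_map_mk_eq hxy
  rw [Subgroup.mem_toConjAct_smul_iff]
  refine Subring.conj_inv_mul_mem_units_matrix (hdQ 0) (hdQ 1) x.2 y.2
    (E := E.map (algebraMap R F)) (fun i j => ⟨E i j, rfl⟩) ?_
  rw [← hlift x, ← hlift y, hE, Matrix.map_add _ (map_add _), Matrix.map_smul' _ _ _ (map_mul _),
    map_mul]

theorem commensurator_integralGL :
    Subgroup.Commensurable.commensurator (integralGL R F n) = ⊤ := by
  refine eq_top_iff.2 fun Q _ => ?_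
  rw [Subgroup.Commensurable.commensurator_mem_iff]
  refine ⟨relIndex_toConjAct_smul_integralGL_ne_zero Q, ?_⟩
  rw [← Subgroup.relIndex_pointwise_smul (ConjAct.toConjAct Q)⁻¹, inv_smul_smul, ← map_inv]
  exact relIndex_toConjAct_smul_integralGL_ne_zero Q⁻¹

end IntegralGL

omit [NumberField K] in
theorem OJR_eq_OJK_inf_integralGL (J : Matrix (Fin m) (Fin m) K) :
    OJR J = OJK J ⊓ integralGL (𝓞 K) K (Fin m) :=
  rfl

theorem stmt_9_general (J : Matrix (Fin m) (Fin m) K)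
    (P : GL (Fin m) K) (hP : P ∈ OJK J) :
    Subgroup.Commensurable (OJR J) ((OJR J).map (MulAut.conj P⁻¹).toMonoidHom) := by
  rw [Subgroup.map_mulAutConj_eq_toConjAct_smul, OJR_eq_OJK_inf_integralGL]
  refine (Subgroup.Commensurable.toConjAct_smul_inf ((OJK J).inv_mem hP) ?_).symm
  rw [← Subgroup.Commensurable.commensurator_mem_iff, commensurator_integralGL]
  exact Subgroup.mem_top _

theorem stmt_9 (hm : 1 ≤ m) (J : Matrix (Fin m) (Fin m) K)
    (P : GL (Fin m) K) (hP : P ∈ OJK J) :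
    Subgroup.Commensurable (OJR J) ((OJR J).map (MulAut.conj P⁻¹).toMonoidHom) :=
  stmt_9_general J P hP
end

section
/- Let K be a number field with ring of integers R, let m ≥ 1, and let J be an m×m matrix over K. Let Γ be a subgroup of O(J,K) which is commensurable with O(J,R), and let P ∈ O(J,K). Then Γ and P⁻¹·Γ·P are commensurable. -/
open Matrix NumberField

variable {K : Type*} [Field K] [NumberField K] {m : ℕ}

/-
The integral points `GL_n(R)` contain, for every `Q ∈ GL_n(K)`, a principal congruence subgroup
`Γ(d²)` with `Q⁻¹ Γ(d²) Q ⊆ GL_n(R)`, where `d ≠ 0` clears the denominators of `Q` and `Q⁻¹`: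
indeed `Q⁻¹ (1 + d² E) Q = 1 + (d Q⁻¹) E (d Q)`. As `R ⧸ (d²)` is finite, `Γ(d²)` has finite index,
so every `Q ∈ O(J,K)` lies in the commensurator of `O(J,R) = O(J,K) ∩ GL_n(R)`. Commensurable
subgroups have the same commensurator, so `P⁻¹` also commensurates `Γ`.
-/

open Pointwise

namespace RingHom

variable {n R S : Type*} [Fintype n] [DecidableEq n] [CommRing R] [CommRing S]

theorem mem_range_mapMatrix_iff {f : R →+* S} {A : Matrix n n S} :
    A ∈ f.mapMatrix.range ↔ ∀ i j, A i j ∈ f.range := by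
  refine ⟨fun ⟨B, hB⟩ i j => ⟨B i j, by rw [← hB]; rfl⟩, fun h => ?_⟩
  choose B hB using h
  exact ⟨B, Matrix.ext hB⟩

end RingHom

theorem Subgroup.le_commensurator_of_relIndex_ne_zero {G : Type*} [Group G] {S Λ : Subgroup G}
    (h : ∀ g ∈ S, (ConjAct.toConjAct g • Λ).relIndex Λ ≠ 0) :
    S ≤ Subgroup.Commensurable.commensurator Λ := by
  intro g hg
  rw [Subgroup.Commensurable.commensurator_mem_iff]
  refine ⟨h g hg, ?_⟩
  rw [← Subgroup.relIndex_pointwise_smul (ConjAct.toConjAct g)⁻¹, inv_smul_smul, ← map_inv]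
  exact h g⁻¹ (S.inv_mem hg)

namespace Matrix.GeneralLinearGroup

variable {R S n : Type*} [CommRing R] [CommRing S] [Algebra R S] [Fintype n] [DecidableEq n]

variable (R S n) in
abbrev integralGL : Subgroup (GL n S) := (map (algebraMap R S)).range

variable (S) in
abbrev congruenceGL (I : Ideal R) : Subgroup (GL n S) :=
  (map (Ideal.Quotient.mk I)).ker.map (map (algebraMap R S))

theorem mem_integralGL_iff (hf : Function.Injective (algebraMap R S)) {g : GL n S} :
    g ∈ integralGL R S n ↔
      (g : Matrix n n S) ∈ (algebraMap R S).mapMatrix.range ∧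
        ((g⁻¹ : GL n S) : Matrix n n S) ∈ (algebraMap R S).mapMatrix.range := by
  refine ⟨?_, fun ⟨⟨A, hA⟩, ⟨B, hB⟩⟩ => ?_⟩
  · rintro ⟨g₀, rfl⟩
    exact ⟨⟨g₀, rfl⟩, ⟨(g₀⁻¹ : GL n R), by rw [← GeneralLinearGroup.map_inv]; rfl⟩⟩
  · have hinj : Function.Injective ((algebraMap R S).mapMatrix : Matrix n n R →+* _) :=
      Matrix.map_injective hf
    refine ⟨⟨A, B, hinj ?_, hinj ?_⟩, Units.ext hA⟩
    · rw [map_mul, hA, hB, Units.mul_inv, map_one]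
    · rw [map_mul, hA, hB, Units.inv_mul, map_one]

theorem map_injective {T : Type*} [CommRing T] {f : R →+* T} (hf : Function.Injective f) :
    Function.Injective (map f : GL n R →* GL n T) :=
  Units.map_injective (Matrix.map_injective hf)

theorem relIndex_congruenceGL_ne_zero (hf : Function.Injective (algebraMap R S)) (I : Ideal R)
    [Finite (R ⧸ I)] : (congruenceGL S I : Subgroup (GL n S)).relIndex (integralGL R S n) ≠ 0 := by
  rw [congruenceGL, integralGL, MonoidHom.range_eq_map,
    Subgroup.relIndex_map_map_of_injective _ _ (map_injective hf), Subgroup.relIndex_top_right]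
  exact Subgroup.FiniteIndex.index_ne_zero

theorem exists_coe_eq_one_add_smul {c : R} {g : GL n R}
    (hg : g ∈ (map (Ideal.Quotient.mk (Ideal.span {c}))).ker) :
    ∃ E : Matrix n n R, (g : Matrix n n R) = 1 + c • E := by
  have hentry (i j : n) : ∃ e, (g : Matrix n n R) i j = (1 : Matrix n n R) i j + c * e := by
    have h := congrArg (fun x : GL n (R ⧸ Ideal.span {c}) => x.val i j) hg
    simp only [GeneralLinearGroup.map_apply, Units.val_one] at h
    rw [← map_one (Ideal.Quotient.mk _).mapMatrix] at h
    obtain ⟨e, he⟩ := Ideal.mem_span_singleton'.mp (Ideal.Quotient.eq.mp h)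
    exact ⟨e, by rw [mul_comm, he]; ring⟩
  choose E hE using hentry
  exact ⟨Matrix.of E, Matrix.ext fun i j => by simp [hE]⟩

theorem conj_mem_range_mapMatrix_of_mem_congruenceGL {d : R} {Q : GL n S}
    (hQ : algebraMap R S d • (Q : Matrix n n S) ∈ (algebraMap R S).mapMatrix.range)
    (hQinv : algebraMap R S d • ((Q⁻¹ : GL n S) : Matrix n n S) ∈ (algebraMap R S).mapMatrix.range)
    {g : GL n S} (hg : g ∈ congruenceGL S (Ideal.span {d * d})) :
    ((Q⁻¹ * g * Q : GL n S) : Matrix n n S) ∈ (algebraMap R S).mapMatrix.range := by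
  obtain ⟨g₀, hg₀, rfl⟩ := hg
  obtain ⟨E, hE⟩ := exists_coe_eq_one_add_smul hg₀
  have key : ((Q⁻¹ * map (algebraMap R S) g₀ * Q : GL n S) : Matrix n n S) =
      1 + (algebraMap R S d • ((Q⁻¹ : GL n S) : Matrix n n S)) * (algebraMap R S).mapMatrix E *
        (algebraMap R S d • (Q : Matrix n n S)) := by
    have hg₀ : ((map (algebraMap R S) g₀ : GL n S) : Matrix n n S) =
        1 + algebraMap R S (d * d) • (algebraMap R S).mapMatrix E := by
      change (algebraMap R S).mapMatrix (g₀ : Matrix n n R) = _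
      rw [hE, map_add, map_one, algebraMap_smul]
      congr 1
      ext i j
      rw [RingHom.mapMatrix_apply, Matrix.map_apply, Matrix.smul_apply, Matrix.smul_apply]
      simp [Algebra.smul_def]
    rw [Units.val_mul, Units.val_mul, hg₀]
    simp only [mul_add, add_mul, mul_one, Units.inv_mul, Matrix.smul_mul, Matrix.mul_smul, smul_smul,
      map_mul]
  rw [key]
  exact add_mem (one_mem _) (mul_mem (mul_mem hQinv ⟨E, rfl⟩) hQ)

theorem conj_mem_integralGL_of_mem_congruenceGL (hf : Function.Injective (algebraMap R S))
    {d : R} {Q : GL n S}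
    (hQ : algebraMap R S d • (Q : Matrix n n S) ∈ (algebraMap R S).mapMatrix.range)
    (hQinv : algebraMap R S d • ((Q⁻¹ : GL n S) : Matrix n n S) ∈ (algebraMap R S).mapMatrix.range)
    {g : GL n S} (hg : g ∈ congruenceGL S (Ideal.span {d * d})) :
    Q⁻¹ * g * Q ∈ integralGL R S n := by
  refine (mem_integralGL_iff hf).mpr ⟨conj_mem_range_mapMatrix_of_mem_congruenceGL hQ hQinv hg, ?_⟩
  rw [show (Q⁻¹ * g * Q)⁻¹ = Q⁻¹ * g⁻¹ * Q by group]
  exact conj_mem_range_mapMatrix_of_mem_congruenceGL hQ hQinv (inv_mem hg)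

theorem exists_smul_mem_range_mapMatrix [IsFractionRing R S] {ι : Type*} [Finite ι]
    (A : ι → Matrix n n S) :
    ∃ d ∈ nonZeroDivisors R, ∀ k, algebraMap R S d • A k ∈ (algebraMap R S).mapMatrix.range := by
  obtain ⟨b, hb⟩ := IsLocalization.exist_integer_multiples_of_finite (nonZeroDivisors R)
    (fun p : ι × n × n => A p.1 p.2.1 p.2.2)
  refine ⟨b, b.2, fun k => RingHom.mem_range_mapMatrix_iff.mpr fun i j => ?_⟩
  obtain ⟨r, hr⟩ := hb (k, i, j)
  exact ⟨r, by rw [hr, Algebra.smul_def]; rfl⟩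

theorem relIndex_conj_inf_integralGL_ne_zero [IsDomain R] [Ring.HasFiniteQuotients R]
    [IsFractionRing R S] {H : Subgroup (GL n S)} {Q : GL n S} (hQ : Q ∈ H) :
    (ConjAct.toConjAct Q • (H ⊓ integralGL R S n)).relIndex (H ⊓ integralGL R S n) ≠ 0 := by
  obtain ⟨d, hd, hdQ⟩ := exists_smul_mem_range_mapMatrix (R := R)
    ![(Q : Matrix n n S), ((Q⁻¹ : GL n S) : Matrix n n S)]
  have : Finite (R ⧸ Ideal.span {d * d}) := Ring.HasFiniteQuotients.finiteQuotient
    (by simp [nonZeroDivisors.ne_zero hd])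
  have hle : H ⊓ integralGL R S n ⊓ congruenceGL S (Ideal.span {d * d}) ≤
      ConjAct.toConjAct Q • (H ⊓ integralGL R S n) := by
    rintro g ⟨⟨hgH, -⟩, hg⟩
    rw [Subgroup.mem_pointwise_smul_iff_inv_smul_mem, ConjAct.smul_def, map_inv,
      ConjAct.ofConjAct_toConjAct, inv_inv]
    exact ⟨H.mul_mem (H.mul_mem (H.inv_mem hQ) hgH) hQ, conj_mem_integralGL_of_mem_congruenceGL
      (IsFractionRing.injective R S) (hdQ 0) (hdQ 1) hg⟩
  refine ne_zero_of_dvd_ne_zero ?_ (Subgroup.relIndex_dvd_of_le_left _ hle)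
  rw [Subgroup.inf_relIndex_left]
  exact mt (Subgroup.relIndex_eq_zero_of_le_right inf_le_right)
    (relIndex_congruenceGL_ne_zero (IsFractionRing.injective R S) _)

theorem le_commensurator_inf_integralGL [IsDomain R] [Ring.HasFiniteQuotients R]
    [IsFractionRing R S] (H : Subgroup (GL n S)) :
    H ≤ Subgroup.Commensurable.commensurator (H ⊓ integralGL R S n) :=
  Subgroup.le_commensurator_of_relIndex_ne_zero fun _ ↦ relIndex_conj_inf_integralGL_ne_zero

end Matrix.GeneralLinearGroup

theorem OJR_eq_inf_integralGL (J : Matrix (Fin m) (Fin m) K) :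
    OJR J = OJK J ⊓ Matrix.GeneralLinearGroup.integralGL (𝓞 K) K (Fin m) := by
  ext g
  rw [Subgroup.mem_inf, Matrix.GeneralLinearGroup.mem_integralGL_iff (IsFractionRing.injective _ _),
    RingHom.mem_range_mapMatrix_iff, RingHom.mem_range_mapMatrix_iff]
  rfl

theorem stmt_10_general (J : Matrix (Fin m) (Fin m) K)
    (Γ : Subgroup (GL (Fin m) K))
    (hcomm : Subgroup.Commensurable Γ (OJR J))
    (P : GL (Fin m) K) (hP : P ∈ OJK J) :
    Subgroup.Commensurable Γ (Γ.map (MulAut.conj P⁻¹).toMonoidHom) := by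
  have hP' : P⁻¹ ∈ Subgroup.Commensurable.commensurator Γ := by
    rw [hcomm.eq, OJR_eq_inf_integralGL]
    exact Matrix.GeneralLinearGroup.le_commensurator_inf_integralGL _ ((OJK J).inv_mem hP)
  exact hP'.symm

theorem stmt_10 (hm : 1 ≤ m) (J : Matrix (Fin m) (Fin m) K)
    (Γ : Subgroup (GL (Fin m) K)) (hΓ : Γ ≤ OJK J)
    (hcomm : Subgroup.Commensurable Γ (OJR J))
    (P : GL (Fin m) K) (hP : P ∈ OJK J) :
    Subgroup.Commensurable Γ (Γ.map (MulAut.conj P⁻¹).toMonoidHom) :=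
  stmt_10_general J Γ hcomm P hP
end

section
/- Let n be a natural number with n ≡ 1 (mod 4) and n ≥ 5. Then for every N, the following identities hold in MvPolynomial (Fin N) (ZMod 2): I_{n,0} = 0, I_{n,1} = 0, I_{n,2} = e_1², and I_{n,3} = e_1·e_2 + e_3. -/
open MvPolynomial

/-!
By Lucas' theorem the coefficients `ε(n-d+1)` and `ε(C(n,j))`, `j ≤ d ≤ 3`, only depend on
`n mod 4`, so `I_{n,d} = I_{1,d} = ε(2-d)·h_d + h_{d-1}·p_1`. Splitting the monomials of `h_d`
into the squarefree ones, which make up `e_d`, and the others gives `h_2 = e_2 + p_2` and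
`h_3 = e_3 + e_1 p_2`, from which the four identities follow in characteristic 2.
-/

namespace MvPolynomial

variable {σ : Type*} [Fintype σ] [DecidableEq σ] {R : Type*} [CommSemiring R]

theorem sum_sym_nodup_eq_esymm (n : ℕ) :
    ∑ s ∈ Finset.univ.filter (fun s : Sym σ n => (s : Multiset σ).Nodup),
      ((s : Multiset σ).map X).prod = esymm σ R n := by
  refine (Finset.sum_bij' (fun t ht => Sym.mk t.val (by simpa using ht))
    (fun s _ => (s : Multiset σ).toFinset) ?_ ?_ ?_ ?_ ?_).symm
  · intro t _
    simpa using t.nodup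
  · intro s hs
    simp only [Finset.mem_filter, Finset.mem_univ, true_and] at hs
    exact Finset.mem_powersetCard.mpr
      ⟨Finset.subset_univ _, (Multiset.toFinset_card_of_nodup hs).trans s.card_coe⟩
  · intro t _
    simp
  · intro s hs
    simp only [Finset.mem_filter, Finset.mem_univ, true_and] at hs
    exact Sym.ext (by simpa using hs.dedup)
  · intro t _
    rfl

theorem hsymm_eq_esymm_add (n : ℕ) :
    hsymm σ R n = esymm σ R n +
      ∑ s ∈ Finset.univ.filter (fun s : Sym σ n => ¬ (s : Multiset σ).Nodup),
        ((s : Multiset σ).map X).prod := by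
  rw [hsymm, ← sum_sym_nodup_eq_esymm, Finset.sum_filter_add_sum_filter_not]
  rfl

theorem sum_sym_two_not_nodup_eq_psum :
    ∑ s ∈ Finset.univ.filter (fun s : Sym σ 2 => ¬ (s : Multiset σ).Nodup),
      ((s : Multiset σ).map X).prod = psum σ R 2 := by
  refine (Finset.sum_bij (fun i _ => Sym.replicate 2 i) ?_ ?_ ?_ ?_).symm
  · intro i _
    simp [Sym.coe_replicate]
  · intro i _ j _ h
    exact Sym.replicate_right_injective two_ne_zero h
  · intro s hs
    simp only [Finset.mem_filter, Finset.mem_univ, true_and, Multiset.nodup_iff_ne_cons_cons,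
      not_forall, not_not] at hs
    obtain ⟨a, t, hs⟩ := hs
    have ht : t = 0 := by simpa [hs] using s.card_coe
    exact ⟨a, Finset.mem_univ a, Sym.ext (by rw [hs, ht]; rfl)⟩
  · intro i _
    simp [Sym.coe_replicate, sq]

theorem sum_sym_three_not_nodup_eq_esymm_one_mul_psum :
    ∑ s ∈ Finset.univ.filter (fun s : Sym σ 3 => ¬ (s : Multiset σ).Nodup),
      ((s : Multiset σ).map X).prod = esymm σ R 1 * psum σ R 2 := by
  rw [esymm_one, psum, Finset.sum_mul_sum, ← Finset.sum_product']
  refine (Finset.sum_bij (fun p _ => p.1 ::ₛ Sym.replicate 2 p.2) ?_ ?_ ?_ ?_).symm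
  · intro p _
    simp [Sym.coe_cons, Sym.coe_replicate]
  · rintro ⟨i, j⟩ _ ⟨i', j'⟩ _ h
    have h' : i ::ₘ Multiset.replicate 2 j = i' ::ₘ Multiset.replicate 2 j' := by
      simpa only [Sym.coe_cons, Sym.coe_replicate] using
        congrArg ((↑) : Sym σ 3 → Multiset σ) h
    have hj : j = j' := by
      by_contra hne
      have hc := congrArg (Multiset.count j) h'
      simp [Multiset.count_cons, hne] at hc
      split_ifs at hc <;> omega
    subst hj
    simpa using h'
  · intro s hs
    simp only [Finset.mem_filter, Finset.mem_univ, true_and, Multiset.nodup_iff_ne_cons_cons,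
      not_forall, not_not] at hs
    obtain ⟨a, t, hs⟩ := hs
    obtain ⟨b, rfl⟩ : ∃ b, t = {b} := Multiset.card_eq_one.mp (by simpa [hs] using s.card_coe)
    refine ⟨(b, a), Finset.mem_univ _, Sym.ext ?_⟩
    rw [hs, Sym.coe_cons, Sym.coe_replicate, Multiset.replicate_succ, Multiset.replicate_one,
      Multiset.cons_swap]
    exact congrArg (a ::ₘ ·) (Multiset.pair_comm b a)
  · intro p _
    simp [Sym.coe_cons, Sym.coe_replicate, sq]

theorem hsymm_two : hsymm σ R 2 = esymm σ R 2 + psum σ R 2 := by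
  rw [hsymm_eq_esymm_add, sum_sym_two_not_nodup_eq_psum]

theorem hsymm_three : hsymm σ R 3 = esymm σ R 3 + esymm σ R 1 * psum σ R 2 := by
  rw [hsymm_eq_esymm_add, sum_sym_three_not_nodup_eq_esymm_one_mul_psum]

end MvPolynomial

theorem Nat.cast_choose_eq_cast_choose_one_of_mod_four_eq_one {n k : ℕ} (hn : n % 4 = 1)
    (hk : k < 4) :
    (n.choose k : ZMod 2) = (Nat.choose 1 k : ZMod 2) := by
  have lucas : (n.choose k : ZMod 2) = ((n % 2).choose (k % 2) * (n / 2).choose (k / 2) : ℕ) :=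
    (ZMod.natCast_eq_natCast_iff _ _ _).mpr Choose.choose_modEq_choose_mod_mul_choose_div_nat
  have half : ((n / 2 : ℕ) : ZMod 2) = 0 := by
    rw [ZMod.natCast_eq_zero_iff_even]; exact Nat.even_iff.mpr (by omega)
  rw [lucas, show n % 2 = 1 by omega]
  interval_cases k <;> simp [half, Nat.choose_eq_zero_of_lt]

theorem Ipoly_eq_Ipoly_one (N : ℕ) {n d : ℕ} (hn : n % 4 = 1) (hd : d < 4) :
    Ipoly N n d = Ipoly N 1 d := by
  have hn2 : (n : ZMod 2) = 1 := by
    rw [← ZMod.natCast_mod, show n % 2 = 1 by omega, Nat.cast_one]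
  have hε : (((n : ℤ) - d + 1 : ℤ) : ZMod 2) = (((1 : ℕ) : ℤ) - d + 1 : ℤ) := by
    push_cast
    rw [hn2]
  unfold Ipoly
  rw [hε]
  congr 1
  refine Finset.sum_congr rfl fun j hj => ?_
  rw [Finset.mem_Icc] at hj
  rw [Int.cast_natCast, Int.cast_natCast,
    Nat.cast_choose_eq_cast_choose_one_of_mod_four_eq_one hn (hj.2.trans_lt hd)]

theorem Ipoly_one_zero (N : ℕ) : Ipoly N 1 0 = 0 := by
  simp [Ipoly, CharTwo.two_eq_zero]

theorem Ipoly_one_one (N : ℕ) : Ipoly N 1 1 = 0 := by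
  simp [Ipoly, hsymm_one, psum_one, CharTwo.add_self_eq_zero]

theorem Ipoly_one_two (N : ℕ) : Ipoly N 1 2 = esymm (Fin N) (ZMod 2) 1 ^ 2 := by
  simp [Ipoly, show Finset.Icc 1 2 = {1, 2} from rfl, hsymm_one, psum_one, esymm_one, sq]

theorem Ipoly_one_three (N : ℕ) :
    Ipoly N 1 3 = esymm (Fin N) (ZMod 2) 1 * esymm (Fin N) (ZMod 2) 2 +
      esymm (Fin N) (ZMod 2) 3 := by
  simp [Ipoly, show Finset.Icc 1 3 = {1, 2, 3} from rfl, hsymm_one, psum_one, esymm_one,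
    hsymm_two, hsymm_three, Nat.choose_eq_zero_of_lt]
  -- the two copies of `e₁ p₂` cancel
  linear_combination (∑ i, X i) * psum (Fin N) (ZMod 2) 2 *
    CharTwo.two_eq_zero (R := MvPolynomial (Fin N) (ZMod 2))

theorem stmt_13_general (n : ℕ) (h4 : n % 4 = 1) (N : ℕ) :
    Ipoly N n 0 = 0 ∧ Ipoly N n 1 = 0 ∧
    Ipoly N n 2 = (esymm (Fin N) (ZMod 2) 1) ^ 2 ∧
    Ipoly N n 3 = esymm (Fin N) (ZMod 2) 1 * esymm (Fin N) (ZMod 2) 2 +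
      esymm (Fin N) (ZMod 2) 3 := by
  have reduce (d : ℕ) (hd : d < 4) := Ipoly_eq_Ipoly_one N h4 hd
  rw [reduce 0 (by norm_num), reduce 1 (by norm_num), reduce 2 (by norm_num),
    reduce 3 (by norm_num)]
  exact ⟨Ipoly_one_zero N, Ipoly_one_one N, Ipoly_one_two N, Ipoly_one_three N⟩

theorem stmt_13 (n : ℕ) (h4 : n % 4 = 1) (hn : 5 ≤ n) (N : ℕ) :
    Ipoly N n 0 = 0 ∧ Ipoly N n 1 = 0 ∧
    Ipoly N n 2 = (esymm (Fin N) (ZMod 2) 1) ^ 2 ∧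
    Ipoly N n 3 = esymm (Fin N) (ZMod 2) 1 * esymm (Fin N) (ZMod 2) 2 +
      esymm (Fin N) (ZMod 2) 3 :=
  stmt_13_general n h4 N
end
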